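/- Let μ(x) = e^x/(1+e^x). Then for all real x, |μ''''(x)| ≤ (11/3) · e^x/(1+e^x)^2, i.e., the absolute value of the fourth derivative of μ is bounded by 11/3 times its first derivative. -/

import Mathlib

open Real

private lemma one_add_exp_pos (x : ℝ) : (0:ℝ) < 1 + Real.exp x := by positivity

private lemma d1 (x : ℝ) : HasDerivAt (fun x => Real.exp x / (1 + Real.exp x))
    (Real.exp x / (1 + Real.exp x) ^ 2) x := by
  have h := (Real.hasDerivAt_exp x).div ((hasDerivAt_const x (1:ℝ)).add (Real.hasDerivAt_exp x))
    (ne_of_gt (one_add_exp_pos x))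
  refine h.congr_deriv ?_
  have := (one_add_exp_pos x).ne'
  simp only [Pi.add_apply, Pi.sub_apply, Pi.mul_apply]
  field_simp
  ring

private lemma d2 (x : ℝ) : HasDerivAt (fun x => Real.exp x / (1 + Real.exp x) ^ 2)
    (Real.exp x * (1 - Real.exp x) / (1 + Real.exp x) ^ 3) x := by
  have hd : HasDerivAt (fun x => (1 + Real.exp x) ^ 2)
      (2 * (1 + Real.exp x) ^ 1 * Real.exp x) x := by
    exact (((hasDerivAt_const x (1:ℝ)).add (Real.hasDerivAt_exp x)).pow 2).congr_deriv (by simp)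
  have h := (Real.hasDerivAt_exp x).div hd (by positivity)
  refine h.congr_deriv ?_
  have := (one_add_exp_pos x).ne'
  field_simp
  ring

private lemma d3 (x : ℝ) :
    HasDerivAt (fun x => Real.exp x * (1 - Real.exp x) / (1 + Real.exp x) ^ 3)
    (Real.exp x * (1 - 4 * Real.exp x + Real.exp x ^ 2) / (1 + Real.exp x) ^ 4) x := by
  have hn := (Real.hasDerivAt_exp x).mul ((hasDerivAt_const x (1:ℝ)).sub (Real.hasDerivAt_exp x))
  have hd : HasDerivAt (fun x => (1 + Real.exp x) ^ 3)
      (3 * (1 + Real.exp x) ^ 2 * Real.exp x) x := by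
    exact (((hasDerivAt_const x (1:ℝ)).add (Real.hasDerivAt_exp x)).pow 3).congr_deriv (by simp)
  have h := hn.div hd (by positivity)
  refine h.congr_deriv ?_
  have := (one_add_exp_pos x).ne'
  simp only [Pi.add_apply, Pi.sub_apply, Pi.mul_apply]
  field_simp
  ring

private lemma d4 (x : ℝ) :
    HasDerivAt (fun x => Real.exp x * (1 - 4 * Real.exp x + Real.exp x ^ 2) / (1 + Real.exp x) ^ 4)
    (Real.exp x * (1 - 11 * Real.exp x + 11 * Real.exp x ^ 2 - Real.exp x ^ 3)
      / (1 + Real.exp x) ^ 5) x := by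
  have hp : HasDerivAt (fun x => 1 - 4 * Real.exp x + Real.exp x ^ 2)
      ((0 - 4 * Real.exp x) + 2 * Real.exp x ^ 1 * Real.exp x) x :=
    ((hasDerivAt_const x (1:ℝ)).sub ((Real.hasDerivAt_exp x).const_mul 4)).add
      ((Real.hasDerivAt_exp x).pow 2)
  have hn := (Real.hasDerivAt_exp x).mul hp
  have hd : HasDerivAt (fun x => (1 + Real.exp x) ^ 4)
      (4 * (1 + Real.exp x) ^ 3 * Real.exp x) x := by
    exact (((hasDerivAt_const x (1:ℝ)).add (Real.hasDerivAt_exp x)).pow 4).congr_deriv (by simp)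
  have h := hn.div hd (by positivity)
  refine h.congr_deriv ?_
  have := (one_add_exp_pos x).ne'
  simp only [Pi.add_apply, Pi.sub_apply, Pi.mul_apply]
  field_simp
  ring

theorem logistic_fourth_deriv_bound (x : ℝ) :
    |iteratedDeriv 4 (fun x => Real.exp x / (1 + Real.exp x)) x| ≤
      (11 / 3) * (Real.exp x / (1 + Real.exp x) ^ 2) := by
  have e1 : deriv (fun x => Real.exp x / (1 + Real.exp x))
      = fun x => Real.exp x / (1 + Real.exp x) ^ 2 := funext fun y => (d1 y).deriv
  have e2 : deriv (fun x => Real.exp x / (1 + Real.exp x) ^ 2)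
      = fun x => Real.exp x * (1 - Real.exp x) / (1 + Real.exp x) ^ 3 :=
    funext fun y => (d2 y).deriv
  have e3 : deriv (fun x => Real.exp x * (1 - Real.exp x) / (1 + Real.exp x) ^ 3)
      = fun x => Real.exp x * (1 - 4 * Real.exp x + Real.exp x ^ 2) / (1 + Real.exp x) ^ 4 :=
    funext fun y => (d3 y).deriv
  have key : iteratedDeriv 4 (fun x => Real.exp x / (1 + Real.exp x)) x
      = Real.exp x * (1 - 11 * Real.exp x + 11 * Real.exp x ^ 2 - Real.exp x ^ 3)
        / (1 + Real.exp x) ^ 5 := by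
    have : iteratedDeriv 4 (fun x => Real.exp x / (1 + Real.exp x))
        = deriv (deriv (deriv (deriv (fun x => Real.exp x / (1 + Real.exp x))))) := by
      simp [iteratedDeriv_succ, iteratedDeriv_zero]
    rw [this, e1, e2, e3, (d4 x).deriv]
  rw [key]
  set t := Real.exp x with ht
  have ht0 : 0 < t := Real.exp_pos x
  have h1 : (0:ℝ) < 1 + t := by linarith
  rw [abs_div, abs_of_pos (by positivity : (0:ℝ) < (1 + t) ^ 5), div_le_iff₀ (by positivity)]
  have habs : |t * (1 - 11 * t + 11 * t ^ 2 - t ^ 3)|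
      ≤ (11 / 3) * t * (1 + t) ^ 3 := by
    rw [abs_le]
    constructor <;> nlinarith [sq_nonneg t, sq_nonneg (1 - t), mul_pos ht0 ht0,
      mul_pos (mul_pos ht0 ht0) ht0]
  calc |t * (1 - 11 * t + 11 * t ^ 2 - t ^ 3)| ≤ (11 / 3) * t * (1 + t) ^ 3 := habs
    _ = 11 / 3 * (t / (1 + t) ^ 2) * (1 + t) ^ 5 := by field_simp
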